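/- Let ℓ₁, ℓ₂, ℓ₃ be linear forms on ℝ² such that (ℓ₁⊗ℓ₁, ℓ₂⊗ℓ₂, ℓ₃⊗ℓ₃) is a basis of the space S₂(ℝ²) of symmetric bilinear forms on ℝ², with coordinate functionals H₁, H₂, H₃, and set h_max = max(‖H₁‖, ‖H₂‖, ‖H₃‖) and C_H = 1 + h_max·‖ℓ₂⊗ℓ₂‖ + h_max·‖ℓ₃⊗ℓ₃‖. Let D₁, D₂, D₃, D₄, Err₁, Err₂, Err₃ ∈ S₂(ℝ²) satisfy D_{i+1} = D_i − H_i(D_i)·ℓᵢ⊗ℓᵢ + Err_i for i = 1, 2, 3. Then ‖D₄‖ ≤ C_H·(‖Err₁‖ + ‖Err₂‖ + ‖Err₃‖). -/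

import Mathlib

noncomputable section

abbrev E2 := EuclideanSpace ℝ (Fin 2)

/-- The space of (bi)linear forms on `ℝ²`. -/
abbrev S2 := E2 →ₗ[ℝ] E2 →ₗ[ℝ] ℝ

/-- The norm `‖b‖ = sup_{v ≠ 0} |b(v,v)|/‖v‖²` of a bilinear form on `ℝ²`. -/
noncomputable def bnorm (b : S2) : ℝ :=
  ⨆ v : E2, |b v v| / ‖v‖ ^ 2

/-- The symmetric bilinear form `ℓ ⊗ ℓ : (v,w) ↦ ℓ(v)·ℓ(w)`. -/
noncomputable def tsq (l : E2 →ₗ[ℝ] ℝ) : S2 := l.smulRight l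

/-!
Once the isometric default `D₁` is expanded in the basis `(ℓᵢ⊗ℓᵢ)`, the `i`-th corrugation removes
its `i`-th component exactly; since `Hⱼ(ℓᵢ⊗ℓᵢ) = 0` for `j ≠ i`, the three corrugations together
cancel `D₁` and leave
`D₄ = Err₁ + Err₂ + Err₃ - H₂(Err₁)·ℓ₂⊗ℓ₂ - (H₃(Err₁) + H₃(Err₂))·ℓ₃⊗ℓ₃`.
The bound follows since `‖·‖` is a seminorm and `|Hᵢ| ≤ h_max·‖·‖`.
-/

section LinearAlgebra

variable {R M : Type*} [CommRing R] [AddCommGroup M] [Module R M]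
  {t₁ t₂ t₃ : M} {H₁ H₂ H₃ : M →ₗ[R] R}

theorem coords_eq_of_linearIndependent
    (hindep : ∀ c₁ c₂ c₃ : R, c₁ • t₁ + c₂ • t₂ + c₃ • t₃ = 0 → c₁ = 0 ∧ c₂ = 0 ∧ c₃ = 0)
    {x : M} (hx : x = H₁ x • t₁ + H₂ x • t₂ + H₃ x • t₃) {c₁ c₂ c₃ : R}
    (hc : x = c₁ • t₁ + c₂ • t₂ + c₃ • t₃) :
    H₁ x = c₁ ∧ H₂ x = c₂ ∧ H₃ x = c₃ := by
  obtain ⟨h₁, h₂, h₃⟩ := hindep (H₁ x - c₁) (H₂ x - c₂) (H₃ x - c₃)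
    (by linear_combination (norm := module) hx.symm.trans hc)
  exact ⟨sub_eq_zero.mp h₁, sub_eq_zero.mp h₂, sub_eq_zero.mp h₃⟩

theorem residual_eq_of_lowerTriangular {D₁ D₂ D₃ D₄ E₁ E₂ E₃ : M}
    (hD₁ : D₁ = H₁ D₁ • t₁ + H₂ D₁ • t₂ + H₃ D₁ • t₃)
    (h₂₁ : H₂ t₁ = 0) (h₃₁ : H₃ t₁ = 0) (h₃₂ : H₃ t₂ = 0)
    (h₂ : D₂ = D₁ - H₁ D₁ • t₁ + E₁) (h₃ : D₃ = D₂ - H₂ D₂ • t₂ + E₂)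
    (h₄ : D₄ = D₃ - H₃ D₃ • t₃ + E₃) :
    D₄ = E₁ + E₂ + E₃ - H₂ E₁ • t₂ - (H₃ E₁ + H₃ E₂) • t₃ := by
  have hH₂D₂ : H₂ D₂ = H₂ D₁ + H₂ E₁ := by simp [h₂, h₂₁]
  have hH₃D₃ : H₃ D₃ = H₃ D₁ + H₃ E₁ + H₃ E₂ := by simp [h₃, h₂, h₃₁, h₃₂]
  rw [h₄, hH₃D₃, h₃, hH₂D₂, h₂]
  linear_combination (norm := module) hD₁

end LinearAlgebra

theorem Seminorm.residual_le {M : Type*} [AddCommGroup M] [Module ℝ M] (p : Seminorm ℝ M)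
    {H₂ H₃ : M →ₗ[ℝ] ℝ} {h : ℝ} (hh : 0 ≤ h)
    (hH₂ : ∀ x, |H₂ x| ≤ h * p x) (hH₃ : ∀ x, |H₃ x| ≤ h * p x) (E₁ E₂ E₃ t₂ t₃ : M) :
    p (E₁ + E₂ + E₃ - H₂ E₁ • t₂ - (H₃ E₁ + H₃ E₂) • t₃)
      ≤ (1 + h * p t₂ + h * p t₃) * (p E₁ + p E₂ + p E₃) := by
  set S := p E₁ + p E₂ + p E₃
  have hE : p (E₁ + E₂ + E₃) ≤ S :=
    (map_add_le_add p _ _).trans (add_le_add_left (map_add_le_add p _ _) _)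
  have hH₂E : |H₂ E₁| ≤ h * S := (hH₂ E₁).trans <| by
    gcongr; linarith [apply_nonneg p E₂, apply_nonneg p E₃]
  have hH₃E : |H₃ E₁ + H₃ E₂| ≤ h * S :=
    (abs_add_le _ _).trans <| (add_le_add (hH₃ E₁) (hH₃ E₂)).trans <| by
      rw [← mul_add]; gcongr; linarith [apply_nonneg p E₃]
  calc p (E₁ + E₂ + E₃ - H₂ E₁ • t₂ - (H₃ E₁ + H₃ E₂) • t₃)
      ≤ p (E₁ + E₂ + E₃) + p (H₂ E₁ • t₂) + p ((H₃ E₁ + H₃ E₂) • t₃) :=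
        (map_sub_le_add p _ _).trans (add_le_add_left (map_sub_le_add p _ _) _)
    _ = p (E₁ + E₂ + E₃) + |H₂ E₁| * p t₂ + |H₃ E₁ + H₃ E₂| * p t₃ := by
        simp only [map_smul_eq_mul, Real.norm_eq_abs]
    _ ≤ S + h * S * p t₂ + h * S * p t₃ := by gcongr
    _ = (1 + h * p t₂ + h * p t₃) * S := by ring

theorem bddAbove_range_abs_apply_self_div (B : S2) :
    BddAbove (Set.range fun v : E2 => |B v v| / ‖v‖ ^ 2) := by
  let B' : E2 →L[ℝ] E2 →L[ℝ] ℝ :=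
    LinearMap.toContinuousLinearMap (LinearMap.toContinuousLinearMap.toLinearMap ∘ₗ B)
  refine ⟨‖B'‖, Set.forall_mem_range.mpr fun v => ?_⟩
  rcases eq_or_ne v 0 with rfl | hv
  · simp only [map_zero, abs_zero, zero_div]
    exact norm_nonneg B'
  · rw [div_le_iff₀ (by positivity)]
    simpa [B', sq, mul_assoc] using B'.le_opNorm₂ v v

theorem abs_apply_self_le_bnorm (B : S2) (v : E2) : |B v v| ≤ bnorm B * ‖v‖ ^ 2 := by
  rcases eq_or_ne v 0 with rfl | hv
  · simp
  · rw [← div_le_iff₀ (by positivity)]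
    exact le_ciSup (bddAbove_range_abs_apply_self_div B) v

theorem bnorm_le_of_forall {B : S2} {C : ℝ} (hC : 0 ≤ C) (h : ∀ v : E2, |B v v| ≤ C * ‖v‖ ^ 2) :
    bnorm B ≤ C := by
  refine ciSup_le fun v => ?_
  rcases eq_or_ne v 0 with rfl | hv
  · simpa using hC
  · rw [div_le_iff₀ (by positivity)]
    exact h v

theorem bnorm_nonneg (B : S2) : 0 ≤ bnorm B :=
  Real.iSup_nonneg fun _ => by positivity

theorem bnorm_add_le (B C : S2) : bnorm (B + C) ≤ bnorm B + bnorm C :=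
  bnorm_le_of_forall (add_nonneg (bnorm_nonneg B) (bnorm_nonneg C)) fun v =>
    calc |B v v + C v v| ≤ |B v v| + |C v v| := abs_add_le _ _
      _ ≤ bnorm B * ‖v‖ ^ 2 + bnorm C * ‖v‖ ^ 2 :=
        add_le_add (abs_apply_self_le_bnorm B v) (abs_apply_self_le_bnorm C v)
      _ = (bnorm B + bnorm C) * ‖v‖ ^ 2 := by ring

theorem bnorm_smul (c : ℝ) (B : S2) : bnorm (c • B) = ‖c‖ * bnorm B := by
  simp only [bnorm, LinearMap.smul_apply, smul_eq_mul, abs_mul, Real.norm_eq_abs, mul_div_assoc]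
  exact (Real.mul_iSup_of_nonneg (abs_nonneg c) _).symm

def bnormSeminorm : Seminorm ℝ S2 := Seminorm.of bnorm bnorm_add_le bnorm_smul

theorem tsq_symm (l : E2 →ₗ[ℝ] ℝ) (v w : E2) : tsq l v w = tsq l w v := by
  simp [tsq, mul_comm]

theorem stmt14_general (ℓ₁ ℓ₂ ℓ₃ : E2 →ₗ[ℝ] ℝ)
    (H₁ H₂ H₃ : S2 →ₗ[ℝ] ℝ)
    -- (ℓᵢ⊗ℓᵢ) spans the symmetric forms, with coordinates (Hᵢ)
    (hbasis : ∀ B : S2, (∀ v w : E2, B v w = B w v) →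
      B = H₁ B • tsq ℓ₁ + H₂ B • tsq ℓ₂ + H₃ B • tsq ℓ₃)
    -- (ℓᵢ⊗ℓᵢ) is linearly independent
    (hindep : ∀ c₁ c₂ c₃ : ℝ,
      c₁ • tsq ℓ₁ + c₂ • tsq ℓ₂ + c₃ • tsq ℓ₃ = 0 → c₁ = 0 ∧ c₂ = 0 ∧ c₃ = 0)
    -- h_max bounds the three coordinate functionals: |Hᵢ(B)| ≤ h_max·‖B‖
    (hmax : ℝ)
    (hH : ∀ B : S2,
      |H₁ B| ≤ hmax * bnorm B ∧ |H₂ B| ≤ hmax * bnorm B ∧ |H₃ B| ≤ hmax * bnorm B)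
    (D₁ D₂ D₃ D₄ Err₁ Err₂ Err₃ : S2)
    (hsD₁ : ∀ v w : E2, D₁ v w = D₁ w v)
    (h2 : D₂ = D₁ - H₁ D₁ • tsq ℓ₁ + Err₁)
    (h3 : D₃ = D₂ - H₂ D₂ • tsq ℓ₂ + Err₂)
    (h4 : D₄ = D₃ - H₃ D₃ • tsq ℓ₃ + Err₃) :
    bnorm D₄ ≤ (1 + hmax * bnorm (tsq ℓ₂) + hmax * bnorm (tsq ℓ₃))
      * (bnorm Err₁ + bnorm Err₂ + bnorm Err₃) := by
  obtain ⟨-, h₂₁, h₃₁⟩ := coords_eq_of_linearIndependent (M := S2) hindep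
    (hbasis _ (tsq_symm ℓ₁)) (c₁ := (1 : ℝ)) (c₂ := 0) (c₃ := 0) (by module)
  obtain ⟨-, h₂₂, h₃₂⟩ := coords_eq_of_linearIndependent (M := S2) hindep
    (hbasis _ (tsq_symm ℓ₂)) (c₁ := (0 : ℝ)) (c₂ := 1) (c₃ := 0) (by module)
  have hmax_nonneg : 0 ≤ hmax := by
    have hone := (hH (tsq ℓ₂)).2.1
    rw [h₂₂, abs_one] at hone
    nlinarith [bnorm_nonneg (tsq ℓ₂)]
  rw [residual_eq_of_lowerTriangular (M := S2) (hbasis D₁ hsD₁) h₂₁ h₃₁ h₃₂ h2 h3 h4]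
  exact bnormSeminorm.residual_le hmax_nonneg (fun B => (hH B).2.1) (fun B => (hH B).2.2) _ _ _ _ _

/-- Bound on the residual isometric default after a full round of three corrugations
(Lemma 4.4 of the paper): `‖D₄‖ ≤ C_H·(‖Err₁‖ + ‖Err₂‖ + ‖Err₃‖)` with
`C_H = 1 + h_max·‖ℓ₂⊗ℓ₂‖ + h_max·‖ℓ₃⊗ℓ₃‖`. -/
theorem stmt14 (ℓ₁ ℓ₂ ℓ₃ : E2 →ₗ[ℝ] ℝ)
    (H₁ H₂ H₃ : S2 →ₗ[ℝ] ℝ)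
    -- (ℓᵢ⊗ℓᵢ) spans the symmetric forms, with coordinates (Hᵢ)
    (hbasis : ∀ B : S2, (∀ v w : E2, B v w = B w v) →
      B = H₁ B • tsq ℓ₁ + H₂ B • tsq ℓ₂ + H₃ B • tsq ℓ₃)
    -- (ℓᵢ⊗ℓᵢ) is linearly independent
    (hindep : ∀ c₁ c₂ c₃ : ℝ,
      c₁ • tsq ℓ₁ + c₂ • tsq ℓ₂ + c₃ • tsq ℓ₃ = 0 → c₁ = 0 ∧ c₂ = 0 ∧ c₃ = 0)
    -- h_max bounds the three coordinate functionals: |Hᵢ(B)| ≤ h_max·‖B‖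
    (hmax : ℝ)
    (hH : ∀ B : S2,
      |H₁ B| ≤ hmax * bnorm B ∧ |H₂ B| ≤ hmax * bnorm B ∧ |H₃ B| ≤ hmax * bnorm B)
    (D₁ D₂ D₃ D₄ Err₁ Err₂ Err₃ : S2)
    (hsD₁ : ∀ v w : E2, D₁ v w = D₁ w v)
    (hsD₂ : ∀ v w : E2, D₂ v w = D₂ w v)
    (hsD₃ : ∀ v w : E2, D₃ v w = D₃ w v)
    (hsD₄ : ∀ v w : E2, D₄ v w = D₄ w v)
    (hsE₁ : ∀ v w : E2, Err₁ v w = Err₁ w v)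
    (hsE₂ : ∀ v w : E2, Err₂ v w = Err₂ w v)
    (hsE₃ : ∀ v w : E2, Err₃ v w = Err₃ w v)
    (h2 : D₂ = D₁ - H₁ D₁ • tsq ℓ₁ + Err₁)
    (h3 : D₃ = D₂ - H₂ D₂ • tsq ℓ₂ + Err₂)
    (h4 : D₄ = D₃ - H₃ D₃ • tsq ℓ₃ + Err₃) :
    bnorm D₄ ≤ (1 + hmax * bnorm (tsq ℓ₂) + hmax * bnorm (tsq ℓ₃))
      * (bnorm Err₁ + bnorm Err₂ + bnorm Err₃) :=
  stmt14_general ℓ₁ ℓ₂ ℓ₃ H₁ H₂ H₃ hbasis hindep hmax hH D₁ D₂ D₃ D₄ Err₁ Err₂ Err₃ hsD₁ h2 h3 h4
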